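/- arXiv:1403.0156 — 3 statements merged into one kernel-verified Lean document; each statement's English description precedes it below -/
import Mathlib

section
/- Let A_f be an n×n real matrix, C_f a p×n real matrix, and P an n×q real matrix, with the n×n matrices carrying the L∞ operator norm. Suppose C_f · P = 0 and either C_f · A_f = 0 or A_f · P = 0. Then for every real number z with |z| > ‖A_f‖ (so that zI − A_f is invertible), C_f · (zI − A_f)^{-1} · P = 0. -/
attribute [local instance] Matrix.linftyOpNormedRing
attribute [local instance] Matrix.linftyOpNormedAlgebra

/-- If `C_f * P = 0` and (`C_f * A_f = 0` or `A_f * P = 0`), then for every real `z`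
with `|z| > ‖A_f‖` (L∞ operator norm), the transfer gain `C_f (zI - A_f)⁻¹ P = 0`. -/
theorem stmt_2 (n p q : ℕ)
    (Af : Matrix (Fin n) (Fin n) ℝ)
    (Cf : Matrix (Fin p) (Fin n) ℝ)
    (P : Matrix (Fin n) (Fin q) ℝ)
    (hCP : Cf * P = 0) (h : Cf * Af = 0 ∨ Af * P = 0) :
    ∀ z : ℝ, ‖Af‖ < |z| →
      Cf * (z • (1 : Matrix (Fin n) (Fin n) ℝ) - Af)⁻¹ * P = 0 := by
  intro z hz
  have hz0 : z ≠ 0 := by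
    intro hzz
    rw [hzz, abs_zero] at hz
    exact absurd hz (not_lt.2 (norm_nonneg _))
  set M : Matrix (Fin n) (Fin n) ℝ := z • (1 : Matrix (Fin n) (Fin n) ℝ) - Af with hM
  have hnorm : ‖z⁻¹ • Af‖ < 1 := by
    rw [norm_smul, norm_inv, Real.norm_eq_abs]
    rw [inv_mul_lt_one₀ (lt_of_le_of_lt (norm_nonneg Af) hz)]
    exact hz
  have hunit1 : IsUnit ((1 : Matrix (Fin n) (Fin n) ℝ) - z⁻¹ • Af) :=
    ⟨Units.oneSub _ hnorm, rfl⟩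
  have hMfac : M = (z • (1 : Matrix (Fin n) (Fin n) ℝ)) *
      ((1 : Matrix (Fin n) (Fin n) ℝ) - z⁻¹ • Af) := by
    rw [mul_sub, mul_one, smul_mul_assoc, one_mul, smul_smul, mul_inv_cancel₀ hz0, one_smul]
  have hzunit : IsUnit (z • (1 : Matrix (Fin n) (Fin n) ℝ)) := by
    rw [← Algebra.algebraMap_eq_smul_one]
    exact (isUnit_iff_ne_zero.2 hz0).map (algebraMap ℝ _)
  have hMunit : IsUnit M := by rw [hMfac]; exact hzunit.mul hunit1
  have hdet : IsUnit M.det := (Matrix.isUnit_iff_isUnit_det M).1 hMunit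
  rcases h with hCA | hAP
  · have h1 : Cf * M = z • Cf := by
      rw [hM, Matrix.mul_sub, Matrix.mul_smul, Matrix.mul_one, hCA, sub_zero]
    calc Cf * M⁻¹ * P = z⁻¹ • ((z • Cf) * M⁻¹ * P) := by
          rw [Matrix.smul_mul, Matrix.smul_mul, smul_smul, inv_mul_cancel₀ hz0, one_smul]
      _ = z⁻¹ • (Cf * M * M⁻¹ * P) := by rw [h1]
      _ = z⁻¹ • (Cf * P) := by rw [Matrix.mul_nonsing_inv_cancel_right _ _ hdet]
      _ = 0 := by rw [hCP, smul_zero]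
  · have h1 : M * P = z • P := by
      rw [hM, Matrix.sub_mul, Matrix.smul_mul, Matrix.one_mul, hAP, sub_zero]
    have h2 : M⁻¹ * P = z⁻¹ • P := by
      calc M⁻¹ * P = z⁻¹ • (M⁻¹ * (z • P)) := by
            rw [Matrix.mul_smul, smul_smul, inv_mul_cancel₀ hz0, one_smul]
        _ = z⁻¹ • (M⁻¹ * (M * P)) := by rw [h1]
        _ = z⁻¹ • P := by rw [Matrix.nonsing_inv_mul_cancel_left _ _ hdet]
    rw [Matrix.mul_assoc, h2, Matrix.mul_smul, hCP, smul_zero]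
end

section
/- Let A_f be an n×n real matrix, C_f a p×n real matrix, and P an n×q real matrix, and suppose C_f · P = 0 and either C_f · A_f = 0 or A_f · P = 0. Let ξ : ℕ → ℝ^q be an arbitrary sequence and let ε : ℕ → ℝⁿ satisfy ε(t+1) = A_f ε(t) + P ξ(t). Then the residual r(t) := C_f ε(t) satisfies r(t) = C_f A_f^t ε(0) for every t; in particular r(t) is independent of the anomaly signal ξ, and if ε(0) = 0 then r(t) = 0 for all t. -/
open Matrix

/-- If `C_f P = 0` and (`C_f A_f = 0` or `A_f P = 0`), and `ε(t+1) = A_f ε(t) + P ξ(t)`,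
then the residual `r(t) = C_f ε(t)` satisfies `r(t) = C_f A_f^t ε(0)`; in particular
it is independent of the anomaly signal `ξ`, and vanishes if `ε(0) = 0`. -/
theorem stmt_7 (n p q : ℕ)
    (Af : Matrix (Fin n) (Fin n) ℝ)
    (Cf : Matrix (Fin p) (Fin n) ℝ)
    (P : Matrix (Fin n) (Fin q) ℝ)
    (hCP : Cf * P = 0) (h : Cf * Af = 0 ∨ Af * P = 0)
    (ξ : ℕ → Fin q → ℝ)
    (ε : ℕ → Fin n → ℝ)
    (hε : ∀ t, ε (t + 1) = Af *ᵥ ε t + P *ᵥ ξ t)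
    (r : ℕ → Fin p → ℝ)
    (hr : ∀ t, r t = Cf *ᵥ ε t) :
    (∀ t, r t = (Cf * Af ^ t) *ᵥ ε 0) ∧
      (ε 0 = 0 → ∀ t, r t = 0) := by
  have hkill : ∀ k : ℕ, Cf * Af ^ k * P = 0 := by
    intro k
    rcases h with h | h
    · cases k with
      | zero => simpa using hCP
      | succ k =>
          have : Cf * Af ^ (k + 1) = (Cf * Af) * Af ^ k := by
            rw [pow_succ', Matrix.mul_assoc]
          rw [this, h, Matrix.zero_mul, Matrix.zero_mul]
    · cases k with
      | zero => simpa using hCP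
      | succ k =>
          have : Cf * Af ^ (k + 1) * P = Cf * Af ^ k * (Af * P) := by
            rw [pow_succ, Matrix.mul_assoc, Matrix.mul_assoc, ← Matrix.mul_assoc Cf]
          rw [this, h, Matrix.mul_zero]
  have key : ∀ t k : ℕ, (Cf * Af ^ k) *ᵥ ε t = (Cf * Af ^ (k + t)) *ᵥ ε 0 := by
    intro t
    induction t with
    | zero => intro k; simp
    | succ t ih =>
        intro k
        rw [hε t, Matrix.mulVec_add, Matrix.mulVec_mulVec, Matrix.mulVec_mulVec]
        have h1 : Cf * Af ^ k * Af = Cf * Af ^ (k + 1) := by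
          rw [pow_succ, Matrix.mul_assoc]
        rw [h1, hkill k, ih (k + 1)]
        have h2 : k + 1 + t = k + (t + 1) := by ring
        rw [h2]
        simp
  have main : ∀ t, r t = (Cf * Af ^ t) *ᵥ ε 0 := by
    intro t
    have := key t 0
    simpa [hr t] using this
  refine ⟨main, fun h0 t => ?_⟩
  rw [main t, h0, Matrix.mulVec_zero]
end

section
/- Let A be an n×n real matrix, C an m×n real matrix, F an n×m real matrix, and W a p×m real matrix, and write A_f = A − FC and C_f = WC. Suppose C_f · A_f = 0. Let y : ℕ → ℝᵐ be any sequence and let x̂ : ℕ → ℝⁿ satisfy x̂(t+1) = A_f x̂(t) + F y(t). Then the residual r(t) := W y(t) − WC x̂(t) satisfies, for every t ≥ 1, r(t) = W y(t) − C_f F y(t−1); i.e., the residual depends only on the two most recent observations. -/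
open Matrix

/-- If `C_f A_f = 0` (with `A_f = A - FC`, `C_f = WC`) and the observer evolves as
`x̂(t+1) = A_f x̂(t) + F y(t)`, then the residual `r(t) = W y(t) - WC x̂(t)` satisfies,
for every `t ≥ 1`, `r(t) = W y(t) - C_f F y(t-1)`: it depends only on the two most
recent observations. -/
theorem stmt_9 (n m p : ℕ)
    (A : Matrix (Fin n) (Fin n) ℝ)
    (C : Matrix (Fin m) (Fin n) ℝ)
    (F : Matrix (Fin n) (Fin m) ℝ)
    (W : Matrix (Fin p) (Fin m) ℝ)
    (hCA : (W * C) * (A - F * C) = 0)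
    (y : ℕ → Fin m → ℝ)
    (xh : ℕ → Fin n → ℝ)
    (hxh : ∀ t, xh (t + 1) = (A - F * C) *ᵥ xh t + F *ᵥ y t)
    (r : ℕ → Fin p → ℝ)
    (hr : ∀ t, r t = W *ᵥ y t - (W * C) *ᵥ xh t) :
    ∀ t, 1 ≤ t → r t = W *ᵥ y t - ((W * C) * F) *ᵥ y (t - 1) := by
  rintro ⟨_ | s⟩ ht
  · omega
  · simp only [Nat.add_sub_cancel]
    rw [hr, hxh, Matrix.mulVec_add]
    simp only [Matrix.mulVec_mulVec, ← Matrix.mul_assoc]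
    rw [hCA]
    simp
end
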